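/- (GCP upper sandwich bound) Let ν₁, ν₂, … be log-concave probability mass functions on ℕ, λ* ∈ (1, λ^max), Rₙ* = E[Sₙ^{λ*}]. Then for any λ ∈ (λ*, λ^max), n ≥ ℓ, the conditional law of (X₁,…,X_ℓ) given {Sₙ > Rₙ*} is stochastically dominated by the conditional law of (X₁^λ,…,X_ℓ^λ) given {Sₙ^λ > Rₙ*}. -/

import Mathlib

open scoped BigOperators
open scoped Classical

/-- The `l`-tilted measure of a pmf `ν` on `ℕ`. -/
noncomputable def tilt (ν : ℕ → ℝ) (l : ℝ) (x : ℕ) : ℝ :=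
  l ^ x * ν x / (∑' y : ℕ, l ^ y * ν y)

/-- A log-concave probability mass function on `ℕ`. -/
def LogConcavePMF (ν : ℕ → ℝ) : Prop :=
  (∀ x, 0 ≤ ν x) ∧
  (∀ x y : ℕ, x ≤ y → 0 < ν y → 0 < ν x) ∧
  (∀ x : ℕ, ν x * ν (x + 2) ≤ ν (x + 1) ^ 2)

/-- Law of `(X₁,…,X_ℓ)` (marginals `μ i`, independent) conditioned on
`{X₁+⋯+Xₙ > R}`, for `ℓ ≤ n`. -/
noncomputable def condMarginal (μ : ℕ → ℕ → ℝ) (ℓ n : ℕ) (h : ℓ ≤ n) (R : ℝ)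
    (v : Fin ℓ → ℕ) : ℝ :=
  (∑' x : Fin n → ℕ,
      if (∀ i : Fin ℓ, x (Fin.castLE h i) = v i) ∧ R < ((∑ i, x i : ℕ) : ℝ)
      then ∏ i : Fin n, μ i (x i) else 0) /
    (∑' x : Fin n → ℕ,
      if R < ((∑ i, x i : ℕ) : ℝ) then ∏ i : Fin n, μ i (x i) else 0)

/-- Stochastic domination in the coordinatewise order on `ℕ^ℓ`. -/
def StochDom {ℓ : ℕ} (p q : (Fin ℓ → ℕ) → ℝ) : Prop :=
  ∀ f : (Fin ℓ → ℕ) → ℝ, Monotone f → (∃ C, ∀ x, |f x| ≤ C) →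
    (∑' x, f x * p x) ≤ ∑' x, f x * q x

/-!
Conditionally on `Sₙ = s`, the tilted and the untilted vectors have the same law, so both
conditional laws are mixtures of the laws of `X` given `Sₙ = s`, with weights proportional to
`P(Sₙ = s) 1{s > R}` and `λ^s P(Sₙ = s) 1{s > R}`; the second weight has increasing likelihood
ratio with respect to the first. By Efron's theorem, `s ↦ E[F(X) | Sₙ = s]` is nondecreasing for
monotone `F` when the `νᵢ` are log-concave, and a nondecreasing function has a larger mean under
the likelihood-ratio larger weight.

Efron's theorem goes by induction on `n`: the first coordinate given `S = s` and given
`S = s + 1` can be coupled so that it either stays put or moves up by one, and the conditional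
expectation of `F` does not decrease along either move. The log-concavity of the partial sums, the stochastic
comparisons behind the coupling and the final comparison of means are all instances of the basic
composition formula for `2 × 2` minors.
-/

open Finset

section Composition

variable {ι : Type*} [LinearOrder ι] {a₀ a₁ b₀ b₁ : ι → ℝ}

theorem tsum_mul_tsum_le_of_minor_mul_nonneg
    (hminor : ∀ m m', m < m' →
      0 ≤ (a₀ m * a₁ m' - a₀ m' * a₁ m) * (b₀ m * b₁ m' - b₀ m' * b₁ m))
    (h₀₀ : Summable fun m => a₀ m * b₀ m) (h₀₁ : Summable fun m => a₀ m * b₁ m)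
    (h₁₀ : Summable fun m => a₁ m * b₀ m) (h₁₁ : Summable fun m => a₁ m * b₁ m) :
    (∑' m, a₀ m * b₁ m) * ∑' m, a₁ m * b₀ m ≤ (∑' m, a₀ m * b₀ m) * ∑' m, a₁ m * b₁ m := by
  have hprod : ∀ {f g : ι → ℝ}, Summable f → Summable g →
      HasSum (fun p : ι × ι => f p.1 * g p.2) ((∑' m, f m) * ∑' m, g m) := fun hf hg =>
    hf.hasSum.mul hg.hasSum (summable_mul_of_summable_norm hf.norm hg.norm)
  -- Summing the products of minors over all pairs counts each unordered pair twice.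
  have hsum := (((hprod h₀₀ h₁₁).sub (hprod h₀₁ h₁₀)).sub (hprod h₁₀ h₀₁)).add (hprod h₁₁ h₀₀)
  have := hsum.nonneg fun ⟨m, m'⟩ => by
    rcases lt_trichotomy m m' with h | rfl | h
    · exact (hminor m m' h).trans_eq (by ring)
    · exact le_of_eq (by ring)
    · exact (hminor m' m h).trans_eq (by ring)
  linarith

theorem sum_mul_sum_le_of_minor_mul_nonneg (J : Finset ι)
    (hminor : ∀ m ∈ J, ∀ m' ∈ J, m < m' →
      0 ≤ (a₀ m * a₁ m' - a₀ m' * a₁ m) * (b₀ m * b₁ m' - b₀ m' * b₁ m)) :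
    (∑ m ∈ J, a₀ m * b₁ m) * ∑ m ∈ J, a₁ m * b₀ m ≤
      (∑ m ∈ J, a₀ m * b₀ m) * ∑ m ∈ J, a₁ m * b₁ m := by
  simp only [← Finset.tsum_subtype]
  exact tsum_mul_tsum_le_of_minor_mul_nonneg (fun m m' h => hminor m m.2 m' m'.2 h)
    (.of_finite) (.of_finite) (.of_finite) (.of_finite)

end Composition

-- Extending by zero to `ℤ` lets convolution indices `s - k` be written without truncation.
def zeroExt (f : ℕ → ℝ) : ℤ → ℝ
  | Int.ofNat n => f n
  | Int.negSucc _ => 0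

@[simp]
theorem zeroExt_natCast (f : ℕ → ℝ) (n : ℕ) : zeroExt f n = f n := rfl

theorem zeroExt_of_neg (f : ℕ → ℝ) {z : ℤ} (hz : z < 0) : zeroExt f z = 0 := by
  cases z with
  | ofNat n => exact absurd hz (by simp)
  | negSucc _ => rfl

theorem zeroExt_nonneg {f : ℕ → ℝ} (hf : ∀ n, 0 ≤ f n) (z : ℤ) : 0 ≤ zeroExt f z := by
  cases z with
  | ofNat n => exact hf n
  | negSucc _ => exact le_rfl

-- `convWeight μ B s` is the law of `X` on `{X + Y = s}`, for independent `X ∼ μ` and `Y ∼ B`.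
def convWeight (μ B : ℕ → ℝ) (s k : ℕ) : ℝ := μ k * zeroExt B (s - k)

section ConvWeight

variable {μ B : ℕ → ℝ}

theorem convWeight_of_lt {s k : ℕ} (h : s < k) : convWeight μ B s k = 0 := by
  rw [convWeight, zeroExt_of_neg B (by omega), mul_zero]

theorem convWeight_of_le {s k : ℕ} (h : k ≤ s) : convWeight μ B s k = μ k * B (s - k) := by
  rw [convWeight, ← Nat.cast_sub h, zeroExt_natCast]

theorem convWeight_nonneg (hμ : ∀ k, 0 ≤ μ k) (hB : ∀ t, 0 ≤ B t) (s k : ℕ) :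
    0 ≤ convWeight μ B s k :=
  mul_nonneg (hμ k) (zeroExt_nonneg hB _)

theorem le_and_pos_of_convWeight_pos (hμ : ∀ k, 0 ≤ μ k) {s k : ℕ}
    (h : 0 < convWeight μ B s k) : k ≤ s ∧ 0 < B (s - k) := by
  rcases le_or_gt k s with hks | hks
  · rw [convWeight_of_le hks] at h
    exact ⟨hks, pos_of_mul_pos_right h (hμ k)⟩
  · rw [convWeight_of_lt hks] at h; exact absurd h (lt_irrefl 0)

theorem sum_convWeight {s N : ℕ} (h : s < N) :
    ∑ k ∈ range N, convWeight μ B s k = ∑ k ∈ range (s + 1), μ k * B (s - k) := by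
  rw [← sum_subset (range_subset_range.2 h) fun k _ hk => convWeight_of_lt (by simpa using hk)]
  exact sum_congr rfl fun k hk => convWeight_of_le (by simpa [Nat.lt_succ_iff] using hk)

end ConvWeight

namespace LogConcavePMF

variable {μ B : ℕ → ℝ}

theorem mul_succ_le (h : LogConcavePMF μ) {a c : ℕ} (hac : a ≤ c) :
    μ a * μ (c + 1) ≤ μ (a + 1) * μ c := by
  obtain ⟨h0, hdown, hlc⟩ := h
  induction c, hac using Nat.le_induction with
  | base => rw [mul_comm]
  | succ c hac ih =>
    rcases (h0 (c + 1)).eq_or_lt with hz | hpos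
    · have : μ (c + 2) = 0 := by
        by_contra hne
        exact (hdown (c + 1) (c + 2) (by omega) ((h0 _).lt_of_ne' hne)).ne' hz.symm
      rw [this, ← hz, mul_zero, mul_zero]
    · refine le_of_mul_le_mul_right ?_ hpos
      calc μ a * μ (c + 1 + 1) * μ (c + 1) = μ a * μ (c + 1) * μ (c + 2) := by ring
        _ ≤ μ (a + 1) * μ c * μ (c + 2) := mul_le_mul_of_nonneg_right ih (h0 _)
        _ ≤ μ (a + 1) * μ (c + 1) ^ 2 := by
          rw [mul_assoc]; exact mul_le_mul_of_nonneg_left (hlc c) (h0 _)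
        _ = μ (a + 1) * μ (c + 1) * μ (c + 1) := by ring

theorem zeroExt_mul_succ_le (h : LogConcavePMF μ) {i j : ℤ} (hij : i ≤ j) :
    zeroExt μ i * zeroExt μ (j + 1) ≤ zeroExt μ (i + 1) * zeroExt μ j := by
  rcases lt_or_ge i 0 with hi | hi
  · rw [zeroExt_of_neg μ hi, zero_mul]
    exact mul_nonneg (zeroExt_nonneg h.1 _) (zeroExt_nonneg h.1 _)
  · lift i to ℕ using hi
    lift j to ℕ using by omega
    simpa only [← Nat.cast_succ, zeroExt_natCast] using h.mul_succ_le (Nat.cast_le.mp hij)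

theorem conv (hμ : LogConcavePMF μ) (hB : LogConcavePMF B) :
    LogConcavePMF fun t => ∑ k ∈ range (t + 1), μ k * B (t - k) := by
  refine ⟨fun t => sum_nonneg fun k _ => mul_nonneg (hμ.1 k) (hB.1 _), ?_, fun t => ?_⟩
  · intro x y hxy hy
    obtain ⟨k, hk, hne⟩ := exists_ne_zero_of_sum_ne_zero hy.ne'
    have hμk := hμ.2.1 _ k (min_le_left k x) ((hμ.1 k).lt_of_ne' (left_ne_zero_of_mul hne))
    have hBk := hB.2.1 (x - min k x) (y - k) (by simp at hk; omega)
      ((hB.1 _).lt_of_ne' (right_ne_zero_of_mul hne))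
    exact (mul_pos hμk hBk).trans_le <| single_le_sum
      (fun j _ => mul_nonneg (hμ.1 j) (hB.1 _)) (mem_range.2 (by omega))
  · -- The convolution composes the totally positive kernels `(i, m) ↦ μ (m - i)` and
    -- `(m, i) ↦ B (t + 1 + i - m)`.
    have key := sum_mul_sum_le_of_minor_mul_nonneg (range (t + 3))
      (a₀ := fun m => μ m) (a₁ := fun m => zeroExt μ (m - 1))
      (b₀ := fun m => zeroExt B ((t + 1 : ℕ) - m)) (b₁ := fun m => zeroExt B ((t + 2 : ℕ) - m))
      fun m _ m' _ hmm' => by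
        refine mul_nonneg ?_ ?_
        · have := hμ.zeroExt_mul_succ_le (i := m - 1) (j := m' - 1) (by omega)
          simp only [sub_add_cancel, zeroExt_natCast] at this
          linarith
        · have := hB.zeroExt_mul_succ_le (i := (t + 1 : ℕ) - m') (j := (t + 1 : ℕ) - m) (by omega)
          push_cast at this ⊢
          ring_nf at this ⊢
          linarith
    have hshift : ∀ s : ℕ, ∑ m ∈ range (t + 3), zeroExt μ (m - 1) * zeroExt B ((s + 1 : ℕ) - m)
        = ∑ k ∈ range (t + 2), convWeight μ B s k := fun s => by
      rw [sum_range_succ', Nat.cast_zero, zero_sub, zeroExt_of_neg μ (by norm_num), zero_mul,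
        add_zero]
      refine sum_congr rfl fun k _ => ?_
      push_cast
      rw [add_sub_cancel_right, add_sub_add_right_eq_sub, zeroExt_natCast, convWeight]
    simp only [hshift, ← convWeight.eq_1] at key
    rw [sum_convWeight (by omega), sum_convWeight (by omega), sum_convWeight (by omega),
      sum_convWeight (by omega)] at key
    simpa [sq, mul_comm] using key

theorem convWeight_succ_mul_le (hB : LogConcavePMF B) (hμ : ∀ k, 0 ≤ μ k) {s x y : ℕ}
    (hxy : x ≤ y) :
    convWeight μ B (s + 1) x * convWeight μ B s y ≤
      convWeight μ B s x * convWeight μ B (s + 1) y := by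
  have := hB.zeroExt_mul_succ_le (i := s - y) (j := s - x) (by omega)
  have e : ∀ z : ℕ, ((s + 1 : ℕ) : ℤ) - z = s - z + 1 := fun z => by push_cast; ring
  simp only [convWeight, e]
  nlinarith [mul_nonneg (hμ x) (hμ y)]

theorem convWeight_mul_succ_le (hμ : LogConcavePMF μ) (hB : ∀ t, 0 ≤ B t) {s x y : ℕ}
    (hxy : x ≤ y) :
    convWeight μ B s x * convWeight μ B (s + 1) (y + 1) ≤
      convWeight μ B (s + 1) (x + 1) * convWeight μ B s y := by
  have e : ∀ z : ℕ, ((s + 1 : ℕ) : ℤ) - (z + 1 : ℕ) = s - z := fun z => by push_cast; ring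
  simp only [convWeight, e]
  nlinarith [hμ.mul_succ_le hxy, mul_nonneg (zeroExt_nonneg hB (s - x)) (zeroExt_nonneg hB (s - y))]

end LogConcavePMF

section Coupling

def cdf (α : ℕ → ℝ) (x : ℕ) : ℝ := ∑ u ∈ range x, α u

theorem cdf_zero (α : ℕ → ℝ) : cdf α 0 = 0 := sum_range_zero α

theorem cdf_succ (α : ℕ → ℝ) (x : ℕ) : cdf α (x + 1) = cdf α x + α x := sum_range_succ α x

theorem cdf_mono {α : ℕ → ℝ} (hα : ∀ k, 0 ≤ α k) : Monotone (cdf α) := fun _ _ hxy =>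
  sum_le_sum_of_subset_of_nonneg (range_subset_range.2 hxy) fun k _ _ => hα k

theorem cdf_mul_le_of_cross {α β : ℕ → ℝ} (h : ∀ x y, x ≤ y → β x * α y ≤ α x * β y)
    {x M : ℕ} (hxM : x ≤ M) : cdf β x * cdf α M ≤ cdf α x * cdf β M := by
  have key := sum_mul_sum_le_of_minor_mul_nonneg (range M)
    (a₀ := fun m => if m < x then 1 else 0) (a₁ := fun _ => 1) (b₀ := α) (b₁ := β)
    fun m _ m' _ hmm' => by
      refine mul_nonneg ?_ (by linarith [h m m' hmm'.le])
      split_ifs <;> (try omega) <;> norm_num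
  have hx : ∀ γ : ℕ → ℝ, ∑ m ∈ range M, (if m < x then 1 else 0) * γ m = cdf γ x := fun γ => by
    simp only [ite_mul, one_mul, zero_mul, sum_ite, sum_const_zero, add_zero, cdf]
    congr 1
    ext m; simp only [mem_filter, mem_range]; omega
  simpa only [hx, one_mul, cdf] using key

def overlap (a b c d : ℝ) : ℝ := max 0 (min b d - max a c)

theorem overlap_comm (a b c d : ℝ) : overlap a b c d = overlap c d a b := by
  rw [overlap, overlap, min_comm, max_comm a]

theorem overlap_nonneg (a b c d : ℝ) : 0 ≤ overlap a b c d := le_max_left _ _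

theorem overlap_le {a b : ℝ} (hab : a ≤ b) (c d : ℝ) : overlap a b c d ≤ b - a :=
  max_le (by linarith) (by linarith [min_le_left b d, le_max_left a c])

theorem lt_of_overlap_pos {a b c d : ℝ} (h : 0 < overlap a b c d) : c < b ∧ a < d := by
  by_contra! hcon
  refine h.not_ge (max_le le_rfl ?_)
  by_cases hcb : c < b
  · linarith [min_le_right b d, le_max_left a c, hcon hcb]
  · linarith [min_le_left b d, le_max_right a c]

theorem sum_overlap {G : ℕ → ℝ} (hG : Monotone G) {a b : ℝ} (hab : a ≤ b) (h0 : G 0 ≤ a)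
    {M : ℕ} (hM : b ≤ G M) :
    ∑ y ∈ range M, overlap a b (G y) (G (y + 1)) = b - a := by
  have hterm : ∀ y, overlap a b (G y) (G (y + 1)) =
      max 0 (min b (G (y + 1)) - a) - max 0 (min b (G y) - a) := fun y => by
    have := hG (Nat.le_succ y)
    simp only [overlap, max_def, min_def]
    split_ifs <;> linarith
  rw [sum_congr rfl fun y _ => hterm y, sum_range_sub (fun y => max 0 (min b (G y) - a)),
    min_eq_left hM, max_eq_right (by linarith), max_eq_left (by linarith [min_le_right b (G 0)])]
  ring

theorem overlap_cdf_le {α : ℕ → ℝ} (hα : ∀ k, 0 ≤ α k) (x : ℕ) (c d : ℝ) :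
    overlap (cdf α x) (cdf α (x + 1)) c d ≤ α x :=
  (overlap_le (cdf_mono hα x.le_succ) c d).trans_eq (by rw [cdf_succ]; ring)

theorem sum_overlap_cdf {α β : ℕ → ℝ} (hα : ∀ k, 0 ≤ α k) (hβ : ∀ k, 0 ≤ β k) {N : ℕ}
    (hN : cdf α N = cdf β N) {x : ℕ} (hx : x < N) :
    ∑ y ∈ range N, overlap (cdf α x) (cdf α (x + 1)) (cdf β y) (cdf β (y + 1)) = α x := by
  rw [sum_overlap (cdf_mono hβ) (cdf_mono hα x.le_succ)
    (by rw [cdf_zero]; exact sum_nonneg fun k _ => hα k) (hN ▸ cdf_mono hα hx), cdf_succ]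
  ring

theorem eq_or_eq_succ_of_overlap_cdf_pos {α β : ℕ → ℝ} (hα : ∀ k, 0 ≤ α k)
    (hβ : ∀ k, 0 ≤ β k) (h₁ : ∀ x, cdf β x ≤ cdf α x) (h₂ : ∀ x, cdf α x ≤ cdf β (x + 1))
    {x y : ℕ} (h : 0 < overlap (cdf α x) (cdf α (x + 1)) (cdf β y) (cdf β (y + 1))) :
    y = x ∨ y = x + 1 := by
  obtain ⟨hyx, hxy⟩ := lt_of_overlap_pos h
  by_contra! hne
  rcases lt_or_gt_of_ne hne.1 with hlt | hgt
  · linarith [h₁ (y + 1), cdf_mono hα (show y + 1 ≤ x by omega)]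
  · linarith [h₂ (x + 1), cdf_mono hβ (show x + 2 ≤ y by omega)]

theorem sum_mul_le_sum_mul_of_cdf_le {N : ℕ} {α β φ ψ : ℕ → ℝ}
    (hα : ∀ k, 0 ≤ α k) (hβ : ∀ k, 0 ≤ β k) (hN : cdf α N = cdf β N)
    (h₁ : ∀ x, cdf β x ≤ cdf α x) (h₂ : ∀ x, cdf α x ≤ cdf β (x + 1))
    (hφψ : ∀ x, 0 < α x → (0 < β x → φ x ≤ ψ x) ∧ (0 < β (x + 1) → φ x ≤ ψ (x + 1))) :
    ∑ k ∈ range N, α k * φ k ≤ ∑ k ∈ range N, β k * ψ k := by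
  -- The quantile coupling: `π x y` is the mass of those `u` whose `α`-quantile is `x`
  -- and whose `β`-quantile is `y`.
  set π : ℕ → ℕ → ℝ := fun x y => overlap (cdf α x) (cdf α (x + 1)) (cdf β y) (cdf β (y + 1))
  have hcol : ∀ y ∈ range N, ∑ x ∈ range N, π x y = β y := fun y hy => by
    simp only [π, overlap_comm (cdf α _)]
    exact sum_overlap_cdf hβ hα hN.symm (mem_range.1 hy)
  have hπφψ : ∀ x y, π x y * φ x ≤ π x y * ψ y := fun x y => by
    have hπ : 0 ≤ π x y := overlap_nonneg _ _ _ _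
    rcases hπ.eq_or_lt with h0 | hpos
    · rw [← h0, zero_mul, zero_mul]
    refine mul_le_mul_of_nonneg_left ?_ hpos.le
    have hαx : 0 < α x := hpos.trans_le (overlap_cdf_le hα x _ _)
    have hβy : 0 < β y := hpos.trans_le <| (overlap_comm _ _ _ _).le.trans (overlap_cdf_le hβ y _ _)
    rcases eq_or_eq_succ_of_overlap_cdf_pos hα hβ h₁ h₂ hpos with rfl | rfl
    · exact (hφψ y hαx).1 hβy
    · exact (hφψ x hαx).2 hβy
  calc ∑ x ∈ range N, α x * φ x = ∑ x ∈ range N, ∑ y ∈ range N, π x y * φ x :=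
        sum_congr rfl fun x hx => by rw [← sum_mul, sum_overlap_cdf hα hβ hN (mem_range.1 hx)]
    _ ≤ ∑ x ∈ range N, ∑ y ∈ range N, π x y * ψ y :=
        sum_le_sum fun x _ => sum_le_sum fun y _ => hπφψ x y
    _ = ∑ y ∈ range N, β y * ψ y := by
        rw [sum_comm]; exact sum_congr rfl fun y hy => by rw [← sum_mul, hcol y hy]

theorem cdf_eq_of_le {v : ℕ → ℝ} {N : ℕ} (hv : ∀ k, N ≤ k → v k = 0) {x : ℕ} (hx : N ≤ x) :
    cdf v x = cdf v N :=
  (sum_subset (range_subset_range.2 hx) fun k _ hk => hv k (by simpa using hk)).symm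

theorem cdf_mul_le_of_cross_of_support {w w' : ℕ → ℝ} {N : ℕ}
    (hwN : ∀ k, N ≤ k → w k = 0) (hw'N : ∀ k, N ≤ k → w' k = 0)
    (h : ∀ x y, x ≤ y → w' x * w y ≤ w x * w' y) (x : ℕ) :
    cdf w' x * cdf w N ≤ cdf w x * cdf w' N := by
  simpa only [cdf_eq_of_le hwN (Nat.le_add_left N x), cdf_eq_of_le hw'N (Nat.le_add_left N x)]
    using cdf_mul_le_of_cross h (Nat.le_add_right x N)

theorem cdf_mul_le_succ_of_cross_of_support {w w' : ℕ → ℝ} {N : ℕ} (hw : ∀ k, 0 ≤ w k)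
    (hw' : ∀ k, 0 ≤ w' k) (hwN : ∀ k, N ≤ k → w k = 0) (hw'N : ∀ k, N ≤ k → w' k = 0)
    (h : ∀ x y, x ≤ y → w x * w' (y + 1) ≤ w' (x + 1) * w y) (x : ℕ) :
    cdf w x * cdf w' N ≤ cdf w' (x + 1) * cdf w N := by
  have key := cdf_mul_le_of_cross (α := fun k => w' (k + 1)) h (Nat.le_add_right x N)
  have hshift : ∀ y, cdf (fun k => w' (k + 1)) y = cdf w' (y + 1) - w' 0 := fun y => by
    rw [cdf, cdf, sum_range_succ']; ring
  rw [hshift, hshift, cdf_eq_of_le hwN (Nat.le_add_left N x),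
    cdf_eq_of_le hw'N (by omega : N ≤ x + N + 1)] at key
  have hle : cdf w x ≤ cdf w N :=
    (cdf_mono hw (Nat.le_add_right x N)).trans_eq (cdf_eq_of_le hwN (Nat.le_add_left N x))
  nlinarith [mul_nonneg (hw' 0) (sub_nonneg.2 hle)]

theorem sum_mul_mul_sum_le_of_cross {N : ℕ} {w w' φ ψ : ℕ → ℝ}
    (hw : ∀ k, 0 ≤ w k) (hw' : ∀ k, 0 ≤ w' k)
    (hwN : ∀ k, N ≤ k → w k = 0) (hw'N : ∀ k, N ≤ k → w' k = 0)
    (h₁ : ∀ x y, x ≤ y → w' x * w y ≤ w x * w' y)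
    (h₂ : ∀ x y, x ≤ y → w x * w' (y + 1) ≤ w' (x + 1) * w y)
    (hφψ : ∀ x, 0 < w x → (0 < w' x → φ x ≤ ψ x) ∧ (0 < w' (x + 1) → φ x ≤ ψ (x + 1))) :
    (∑ k ∈ range N, w k * φ k) * cdf w' N ≤ (∑ k ∈ range N, w' k * ψ k) * cdf w N := by
  have hzero : ∀ {v χ : ℕ → ℝ}, (∀ k, 0 ≤ v k) → cdf v N = 0 → ∑ k ∈ range N, v k * χ k = 0 :=
    fun hv h0 => sum_eq_zero fun k hk => by
      rw [(sum_eq_zero_iff_of_nonneg fun k _ => hv k).1 h0 k hk, zero_mul]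
  have hW0 : 0 ≤ cdf w N := sum_nonneg fun k _ => hw k
  have hW'0 : 0 ≤ cdf w' N := sum_nonneg fun k _ => hw' k
  rcases hW0.eq_or_lt with hW | hW
  · rw [hzero hw hW.symm, ← hW]; simp
  rcases hW'0.eq_or_lt with hW' | hW'
  · rw [hzero hw' hW'.symm, ← hW']; simp
  have hcdf_div : ∀ (v : ℕ → ℝ) (c : ℝ) x, cdf (fun k => v k / c) x = cdf v x / c :=
    fun v c x => (sum_div _ _ _).symm
  have key := sum_mul_le_sum_mul_of_cdf_le (N := N) (α := fun k => w k / cdf w N)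
    (β := fun k => w' k / cdf w' N) (φ := φ) (ψ := ψ)
    (fun k => div_nonneg (hw k) hW.le) (fun k => div_nonneg (hw' k) hW'.le)
    (by rw [hcdf_div, hcdf_div, div_self hW.ne', div_self hW'.ne'])
    (fun x => by
      rw [hcdf_div, hcdf_div, div_le_div_iff₀ hW' hW]
      exact cdf_mul_le_of_cross_of_support hwN hw'N h₁ x)
    (fun x => by
      rw [hcdf_div, hcdf_div, div_le_div_iff₀ hW hW']
      exact cdf_mul_le_succ_of_cross_of_support hw hw' hwN hw'N h₂ x)
    fun x hx => by
      simpa only [div_pos_iff_of_pos_right hW'] using hφψ x ((div_pos_iff_of_pos_right hW).1 hx)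
  simp only [div_mul_eq_mul_div, ← sum_div] at key
  rwa [div_le_div_iff₀ hW hW'] at key

end Coupling

theorem LogConcavePMF.conv_mul_conv_succ_le {μ B : ℕ → ℝ} (hμ : LogConcavePMF μ)
    (hB : LogConcavePMF B) {A : ℕ → ℕ → ℝ} (hAt : ∀ k t, A k t * B (t + 1) ≤ A k (t + 1) * B t)
    (hAk : ∀ k t, A k t ≤ A (k + 1) t) (hAB : ∀ k t, B t = 0 → A k t = 0) (s : ℕ) :
    (∑ k ∈ range (s + 1), μ k * A k (s - k)) * ∑ k ∈ range (s + 2), μ k * B (s + 1 - k) ≤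
      (∑ k ∈ range (s + 2), μ k * A k (s + 1 - k)) * ∑ k ∈ range (s + 1), μ k * B (s - k) := by
  -- Couple the first summand `k` on the events `{S = s}` and `{S = s + 1}` so that it stays
  -- put or moves up by one; `A k t / B t` does not decrease along either move.
  have key := sum_mul_mul_sum_le_of_cross (N := s + 2)
    (φ := fun k => A k (s - k) / B (s - k)) (ψ := fun k => A k (s + 1 - k) / B (s + 1 - k))
    (convWeight_nonneg hμ.1 hB.1 s) (convWeight_nonneg hμ.1 hB.1 (s + 1))
    (fun k hk => convWeight_of_lt (by omega)) (fun k hk => convWeight_of_lt (by omega))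
    (fun x y => hB.convWeight_succ_mul_le hμ.1) (fun x y => hμ.convWeight_mul_succ_le hB.1)
    fun x hx => by
      obtain ⟨hxs, hBx⟩ := le_and_pos_of_convWeight_pos hμ.1 hx
      refine ⟨fun hx' => ?_, fun hx' => ?_⟩
      · rw [div_le_div_iff₀ hBx (le_and_pos_of_convWeight_pos hμ.1 hx').2,
          show s + 1 - x = s - x + 1 by omega]
        exact hAt x (s - x)
      · rw [show s + 1 - (x + 1) = s - x by omega, div_le_div_iff₀ hBx hBx]
        exact mul_le_mul_of_nonneg_right (hAk x (s - x)) hBx.le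
  have hA : ∀ z : ℕ, z < s + 2 →
      ∑ k ∈ range (s + 2), convWeight μ B z k * (A k (z - k) / B (z - k)) =
        ∑ k ∈ range (z + 1), μ k * A k (z - k) := fun z hz => by
    rw [← sum_subset (range_subset_range.2 hz) fun k _ hk => by
      rw [convWeight_of_lt (by simpa using hk), zero_mul]]
    refine sum_congr rfl fun k hk => ?_
    rw [convWeight_of_le (by simpa [Nat.lt_succ_iff] using hk), mul_assoc]
    by_cases h : B (z - k) = 0
    · rw [h, hAB k _ h, zero_mul]
    · rw [mul_div_cancel₀ _ h]
  rwa [hA s (by omega), hA (s + 1) (by omega), cdf, cdf, sum_convWeight (by omega),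
    sum_convWeight (by omega)] at key

section LevelSum

variable {n : ℕ}

-- `levelSum ν F s = E[F(X); X₁ + ⋯ + Xₙ = s]` for independent `Xᵢ ∼ ν i`.
def levelSum (ν : Fin n → ℕ → ℝ) (F : (Fin n → ℕ) → ℝ) (s : ℕ) : ℝ :=
  ∑ x ∈ Nat.antidiagonalTuple n s, F x * ∏ i, ν i (x i)

theorem levelSum_succ (ν : Fin (n + 1) → ℕ → ℝ) (F : (Fin (n + 1) → ℕ) → ℝ) (s : ℕ) :
    levelSum ν F s = ∑ k ∈ range (s + 1),
      ν 0 k * levelSum (fun i => ν i.succ) (fun y => F (Fin.cons k y)) (s - k) := by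
  simp only [levelSum, mul_sum]
  rw [sum_sigma']
  refine sum_nbij' (fun x => ⟨x 0, Fin.tail x⟩) (fun p => Fin.cons p.1 p.2) ?_ ?_ ?_ ?_ ?_
  · intro x hx
    simp only [mem_sigma, mem_range, Nat.mem_antidiagonalTuple] at hx ⊢
    rw [Fin.sum_univ_succ] at hx
    exact ⟨by omega, by simp only [Fin.tail]; omega⟩
  · rintro ⟨k, y⟩ hp
    simp only [mem_sigma, mem_range, Nat.mem_antidiagonalTuple] at hp ⊢
    rw [Fin.sum_cons]; omega
  · intro x _; exact Fin.cons_self_tail x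
  · rintro ⟨k, y⟩ _; simp
  · intro x _
    simp only [Fin.prod_univ_succ, Fin.cons_self_tail, Fin.tail]
    ring

theorem levelSum_mono {ν : Fin n → ℕ → ℝ} (hν : ∀ i k, 0 ≤ ν i k)
    {F G : (Fin n → ℕ) → ℝ} (hFG : ∀ x, F x ≤ G x) (s : ℕ) :
    levelSum ν F s ≤ levelSum ν G s :=
  sum_le_sum fun x _ => mul_le_mul_of_nonneg_right (hFG x) (prod_nonneg fun i _ => hν i _)

theorem levelSum_eq_zero {ν : Fin n → ℕ → ℝ} (hν : ∀ i k, 0 ≤ ν i k)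
    (F : (Fin n → ℕ) → ℝ) {s : ℕ} (h : levelSum ν (fun _ => 1) s = 0) : levelSum ν F s = 0 := by
  simp only [levelSum, one_mul] at h
  rw [sum_eq_zero_iff_of_nonneg fun x _ => prod_nonneg fun i _ => hν i _] at h
  exact sum_eq_zero fun x hx => by rw [h x hx, mul_zero]

theorem logConcavePMF_levelSum_one {ν : Fin n → ℕ → ℝ} (hν : ∀ i, LogConcavePMF (ν i)) :
    LogConcavePMF (levelSum ν fun _ => 1) := by
  induction n with
  | zero =>
    have : levelSum ν (fun _ => 1) = fun s => if s = 0 then 1 else 0 := by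
      funext s; cases s <;> simp [levelSum]
    rw [this]
    refine ⟨fun x => by positivity, fun x y hxy hy => ?_, fun x => by simp⟩
    have : y = 0 := by by_contra h; simp [h] at hy
    simp [show x = 0 by omega]
  | succ n ih =>
    have : levelSum ν (fun _ => 1) = fun s => ∑ k ∈ range (s + 1),
        ν 0 k * levelSum (fun i => ν i.succ) (fun _ => 1) (s - k) := by
      funext s; exact levelSum_succ ν _ s
    rw [this]
    exact (hν 0).conv (ih fun i => hν i.succ)

theorem levelSum_mul_levelSum_succ_le {ν : Fin n → ℕ → ℝ} (hν : ∀ i, LogConcavePMF (ν i))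
    {F : (Fin n → ℕ) → ℝ} (hF : Monotone F) (s : ℕ) :
    levelSum ν F s * levelSum ν (fun _ => 1) (s + 1) ≤
      levelSum ν F (s + 1) * levelSum ν (fun _ => 1) s := by
  induction n generalizing s with
  | zero => simp [levelSum]
  | succ n ih =>
    simp only [levelSum_succ ν]
    exact (hν 0).conv_mul_conv_succ_le (logConcavePMF_levelSum_one fun i => hν i.succ)
      (A := fun k t => levelSum (fun i => ν i.succ) (fun y => F (Fin.cons k y)) t)
      (fun k t => ih (fun i => hν i.succ) (fun y y' h => hF (Fin.cons_le_cons.2 ⟨le_rfl, h⟩)) t)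
      (fun k t => levelSum_mono (fun i => (hν i.succ).1)
        (fun y => hF (Fin.cons_le_cons.2 ⟨k.le_succ, le_rfl⟩)) t)
      (fun k t h => levelSum_eq_zero (fun i => (hν i.succ).1) _ h) s

theorem levelSum_mul_levelSum_le {ν : Fin n → ℕ → ℝ} (hν : ∀ i, LogConcavePMF (ν i))
    {F : (Fin n → ℕ) → ℝ} (hF : Monotone F) {s t : ℕ} (hst : s ≤ t) :
    levelSum ν F s * levelSum ν (fun _ => 1) t ≤ levelSum ν F t * levelSum ν (fun _ => 1) s := by
  have hb := logConcavePMF_levelSum_one hν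
  induction t, hst using Nat.le_induction with
  | base => exact le_rfl
  | succ t hst ih =>
    rcases (hb.1 t).eq_or_lt with h0 | hpos
    · have h1 : levelSum ν (fun _ => 1) (t + 1) = 0 := by
        by_contra hne
        exact (hb.2.1 t (t + 1) t.le_succ ((hb.1 _).lt_of_ne' hne)).ne' h0.symm
      rw [h1, levelSum_eq_zero (fun i => (hν i).1) F h1, mul_zero, zero_mul]
    refine le_of_mul_le_mul_right ?_ hpos
    nlinarith [mul_le_mul_of_nonneg_right ih (hb.1 (t + 1)),
      mul_le_mul_of_nonneg_left (levelSum_mul_levelSum_succ_le hν hF t) (hb.1 s)]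

end LevelSum

section InfiniteSums

theorem summable_prod_apply {κ : Type*} :
    ∀ {n : ℕ} {g : Fin n → κ → ℝ}, (∀ i, Summable (g i)) →
      Summable fun x : Fin n → κ => ∏ i, g i (x i)
  | 0, _, _ => .of_finite
  | _ + 1, g, hg => by
    rw [← (Fin.consEquiv fun _ => κ).summable_iff]
    simpa [Function.comp_def, Fin.prod_univ_succ, Fin.consEquiv] using
      summable_mul_of_summable_norm (hg 0).norm (summable_prod_apply fun i => hg i.succ).norm

theorem hasSum_mul_tsum_ite {α β : Type*} [DecidableEq β] (p : α → β) {f : β → ℝ} {w : α → ℝ}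
    (h : Summable fun a => f (p a) * w a) :
    HasSum (fun b => f b * ∑' a, if p a = b then w a else 0) (∑' a, f (p a) * w a) := by
  have hfiber : ∀ b, ∑' a : p ⁻¹' {b}, f (p a) * w a = f b * ∑' a, if p a = b then w a else 0 :=
    fun b => by
      rw [_root_.tsum_subtype (p ⁻¹' {b}) (fun a => f (p a) * w a), ← tsum_mul_left]
      congr 1; funext a
      by_cases hab : p a = b <;> simp [Set.indicator, hab]
  simpa only [hfiber] using h.hasSum.tsum_fiberwise p

theorem hasSum_levelSum {n : ℕ} {ν : Fin n → ℕ → ℝ} {F : (Fin n → ℕ) → ℝ} {w : ℕ → ℝ}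
    (h : Summable fun x : Fin n → ℕ => F x * (w (∑ i, x i) * ∏ i, ν i (x i))) :
    HasSum (fun s => w s * levelSum ν F s)
      (∑' x : Fin n → ℕ, F x * (w (∑ i, x i) * ∏ i, ν i (x i))) := by
  simp only [mul_left_comm (F _)] at h ⊢
  convert hasSum_mul_tsum_ite (fun x : Fin n → ℕ => ∑ i, x i) h using 3 with s
  rw [levelSum, tsum_eq_sum (s := Nat.antidiagonalTuple n s)
    (f := fun x => if ∑ i, x i = s then F x * ∏ i, ν i (x i) else 0) fun x hx =>
      if_neg (by rwa [Nat.mem_antidiagonalTuple] at hx)]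
  exact sum_congr rfl fun x hx => (if_pos (Nat.mem_antidiagonalTuple.1 hx)).symm

theorem tsum_mul_tsum_le_of_monotone {n : ℕ} {ν : Fin n → ℕ → ℝ}
    (hν : ∀ i, LogConcavePMF (ν i)) {F : (Fin n → ℕ) → ℝ} (hF : Monotone F) {C : ℝ}
    (hC : ∀ x, |F x| ≤ C) {w₀ w₁ : ℕ → ℝ} (hw : ∀ s t, s ≤ t → w₁ s * w₀ t ≤ w₁ t * w₀ s)
    (h₀ : Summable fun x : Fin n → ℕ => w₀ (∑ i, x i) * ∏ i, ν i (x i))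
    (h₁ : Summable fun x : Fin n → ℕ => w₁ (∑ i, x i) * ∏ i, ν i (x i)) :
    (∑' x, F x * (w₀ (∑ i, x i) * ∏ i, ν i (x i))) *
        ∑' x : Fin n → ℕ, w₁ (∑ i, x i) * ∏ i, ν i (x i) ≤
      (∑' x, F x * (w₁ (∑ i, x i) * ∏ i, ν i (x i))) *
        ∑' x : Fin n → ℕ, w₀ (∑ i, x i) * ∏ i, ν i (x i) := by
  have ha : ∀ {w : ℕ → ℝ}, Summable (fun x : Fin n → ℕ => w (∑ i, x i) * ∏ i, ν i (x i)) →
      HasSum (fun s => w s * levelSum ν F s) (∑' x, F x * (w (∑ i, x i) * ∏ i, ν i (x i))) :=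
    fun h => hasSum_levelSum <| (h.abs.mul_left C).of_norm_bounded fun x => by
      rw [Real.norm_eq_abs, abs_mul]
      exact mul_le_mul_of_nonneg_right (hC x) (abs_nonneg _)
  have hb : ∀ {w : ℕ → ℝ}, Summable (fun x : Fin n → ℕ => w (∑ i, x i) * ∏ i, ν i (x i)) →
      HasSum (fun s => w s * levelSum ν (fun _ => 1) s)
        (∑' x : Fin n → ℕ, w (∑ i, x i) * ∏ i, ν i (x i)) :=
    fun h => by simpa only [one_mul] using hasSum_levelSum (F := fun _ => 1) (by simpa using h)
  rw [← (ha h₀).tsum_eq, ← (ha h₁).tsum_eq, ← (hb h₀).tsum_eq, ← (hb h₁).tsum_eq,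
    mul_comm (∑' s, w₁ s * levelSum ν F s)]
  exact tsum_mul_tsum_le_of_minor_mul_nonneg
    (fun s t hst => mul_nonneg (by linarith [hw s t hst.le])
      (by linarith [levelSum_mul_levelSum_le hν hF hst.le]))
    (hb h₀).summable (ha h₀).summable (hb h₁).summable (ha h₁).summable

end InfiniteSums

section CondMarginal

variable {ℓ n : ℕ} (h : ℓ ≤ n) (R : ℝ)

theorem condMarginal_div_const (μ : ℕ → ℕ → ℝ) {c : ℕ → ℝ} (hc : ∀ i, c i ≠ 0) :
    condMarginal (fun i x => μ i x / c i) ℓ n h R = condMarginal μ ℓ n h R := by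
  funext v
  have hite : ∀ (P : Prop) [Decidable P] (a : ℝ),
      (if P then a / ∏ i : Fin n, c i else 0) = (if P then a else 0) / ∏ i : Fin n, c i :=
    fun P _ a => by split_ifs <;> simp
  simp only [condMarginal, prod_div_distrib, hite, tsum_div_const]
  exact div_div_div_cancel_right₀ (c := ∏ i : Fin n, c i) (prod_ne_zero_iff.2 fun i _ => hc i) _ _

theorem tsum_mul_condMarginal (μ : ℕ → ℕ → ℝ) {f : (Fin ℓ → ℕ) → ℝ} {C : ℝ}
    (hC : ∀ v, |f v| ≤ C)
    (hμ : Summable fun x : Fin n → ℕ =>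
      if R < ((∑ i, x i : ℕ) : ℝ) then ∏ i : Fin n, μ i (x i) else 0) :
    ∑' v, f v * condMarginal μ ℓ n h R v =
      (∑' x : Fin n → ℕ, f (fun i => x (Fin.castLE h i)) *
        if R < ((∑ i, x i : ℕ) : ℝ) then ∏ i : Fin n, μ i (x i) else 0) /
      ∑' x : Fin n → ℕ, if R < ((∑ i, x i : ℕ) : ℝ) then ∏ i : Fin n, μ i (x i) else 0 := by
  have hnum : ∀ (v : Fin ℓ → ℕ) (x : Fin n → ℕ),
      (if (∀ i, x (Fin.castLE h i) = v i) ∧ R < ((∑ i, x i : ℕ) : ℝ)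
        then ∏ i : Fin n, μ i (x i) else 0) =
      if (fun i => x (Fin.castLE h i)) = v
        then (if R < ((∑ i, x i : ℕ) : ℝ) then ∏ i : Fin n, μ i (x i) else 0) else 0 :=
    fun v x => by simp only [funext_iff, ite_and]
  simp only [condMarginal, hnum, mul_div_assoc', tsum_div_const]
  congr 1
  refine (hasSum_mul_tsum_ite (fun x : Fin n → ℕ => fun i => x (Fin.castLE h i)) ?_).tsum_eq
  exact (hμ.abs.mul_left C).of_norm_bounded fun x => by
    rw [Real.norm_eq_abs, abs_mul]
    exact mul_le_mul_of_nonneg_right (hC _) (abs_nonneg _)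

theorem summable_ite_prod {μ : ℕ → ℕ → ℝ} (hμ0 : ∀ i k, 0 ≤ μ i k) (hμ : ∀ i, Summable (μ i)) :
    Summable fun x : Fin n → ℕ =>
      if R < ((∑ i, x i : ℕ) : ℝ) then ∏ i : Fin n, μ i (x i) else 0 := by
  have hprod : ∀ x : Fin n → ℕ, 0 ≤ ∏ i : Fin n, μ i (x i) := fun x =>
    prod_nonneg fun i _ => hμ0 _ _
  refine (summable_prod_apply fun i : Fin n => hμ i).of_nonneg_of_le (fun x => ?_) fun x => ?_
  · split_ifs; exacts [hprod x, le_rfl]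
  · split_ifs; exacts [le_rfl, hprod x]

theorem stochDom_condMarginal_pow_mul {ν : ℕ → ℕ → ℝ} (hν : ∀ i, LogConcavePMF (ν i))
    (hν1 : ∀ i, Summable (ν i)) {c : ℝ} (hc : 1 ≤ c) (hcν : ∀ i, Summable fun x => c ^ x * ν i x)
    (hpos : 0 < ∑' x : Fin n → ℕ,
      if R < ((∑ i, x i : ℕ) : ℝ) then ∏ i : Fin n, ν i (x i) else 0) :
    StochDom (condMarginal ν ℓ n h R) (condMarginal (fun i x => c ^ x * ν i x) ℓ n h R) := by
  rintro f hf ⟨C, hC⟩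
  have hν0 : ∀ i k, 0 ≤ ν i k := fun i => (hν i).1
  set w₀ : ℕ → ℝ := fun s => if R < s then 1 else 0
  set w₁ : ℕ → ℝ := fun s => if R < s then c ^ s else 0
  have e₀ : ∀ x : Fin n → ℕ, (if R < ((∑ i, x i : ℕ) : ℝ) then ∏ i : Fin n, ν i (x i) else 0) =
      w₀ (∑ i, x i) * ∏ i : Fin n, ν i (x i) := fun x => by
    simp only [w₀, ite_mul, one_mul, zero_mul]
  have e₁ : ∀ x : Fin n → ℕ,
      (if R < ((∑ i, x i : ℕ) : ℝ) then ∏ i : Fin n, c ^ x i * ν i (x i) else 0) =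
        w₁ (∑ i, x i) * ∏ i : Fin n, ν i (x i) := fun x => by
    simp only [w₁, ite_mul, zero_mul, prod_mul_distrib, prod_pow_eq_pow_sum]
  have hs₀ := summable_ite_prod R hν0 hν1 (n := n)
  have hs₁ := summable_ite_prod R (fun i k => mul_nonneg (by positivity) (hν0 i k)) hcν (n := n)
  simp only [e₀, e₁] at hpos hs₀ hs₁
  have hD₁ : 0 < ∑' x : Fin n → ℕ, w₁ (∑ i, x i) * ∏ i : Fin n, ν i (x i) :=
    hpos.trans_le <| Summable.tsum_le_tsum (fun x => mul_le_mul_of_nonneg_right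
      (by simp only [w₀, w₁]; split_ifs <;> simp [one_le_pow₀ hc])
      (prod_nonneg fun i _ => hν0 _ _)) hs₀ hs₁
  have hw : ∀ s t, s ≤ t → w₁ s * w₀ t ≤ w₁ t * w₀ s := fun s t hst => by
    have : (s : ℝ) ≤ t := Nat.cast_le.2 hst
    simp only [w₀, w₁]
    split_ifs <;> first | linarith | simp [pow_le_pow_right₀ hc hst]
  rw [tsum_mul_condMarginal h R ν hC (by simpa only [e₀] using hs₀),
    tsum_mul_condMarginal h R _ hC (by simpa only [e₁] using hs₁)]
  simp only [e₀, e₁]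
  rw [div_le_div_iff₀ hpos hD₁]
  exact tsum_mul_tsum_le_of_monotone (fun i => hν i) (F := fun x => f fun i => x (Fin.castLE h i))
    (fun x y hxy => hf fun i => hxy _) (fun x => hC _) hw hs₀ hs₁

end CondMarginal

theorem LogConcavePMF.tsum_pow_mul_pos {ν : ℕ → ℝ} (h : LogConcavePMF ν) (h1 : HasSum ν 1)
    {c : ℝ} (hc : 0 ≤ c) (hcν : Summable fun x => c ^ x * ν x) : 0 < ∑' x, c ^ x * ν x := by
  obtain ⟨y, hy⟩ : ∃ y, ν y ≠ 0 := by
    by_contra! h0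
    simpa [funext h0, tsum_zero] using h1.tsum_eq
  refine (h.2.1 0 y y.zero_le ((h.1 y).lt_of_ne' hy)).trans_le ?_
  simpa using hcν.le_tsum 0 fun j _ => mul_nonneg (pow_nonneg hc j) (h.1 j)

theorem gcp_upper_bound_general (ν : ℕ → ℕ → ℝ)
    (hlc : ∀ i, LogConcavePMF (ν i)) (hν1 : ∀ i, HasSum (ν i) 1)
    (lamstar lam : ℝ) (h1 : 1 < lamstar) (hsl : lamstar < lam)
    (hZ : ∀ i, Summable (fun x : ℕ => lam ^ x * ν i x))
    (ℓ n : ℕ) (hln : ℓ ≤ n)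
    (R : ℝ)
    (hpos : 0 < ∑' x : Fin n → ℕ,
      if R < ((∑ i, x i : ℕ) : ℝ) then ∏ i : Fin n, ν i (x i) else 0) :
    StochDom (condMarginal ν ℓ n hln R)
      (condMarginal (fun i => tilt (ν i) lam) ℓ n hln R) := by
  have hlam : 1 ≤ lam := by linarith
  rw [show (fun i => tilt (ν i) lam) = fun i x => lam ^ x * ν i x / ∑' y, lam ^ y * ν i y from rfl,
    condMarginal_div_const hln R (fun i x => lam ^ x * ν i x)
      fun i => ((hlc i).tsum_pow_mul_pos (hν1 i) (by linarith) (hZ i)).ne']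
  exact stochDom_condMarginal_pow_mul hln R hlc (fun i => (hν1 i).summable) hlam hZ hpos

/-- GCP upper sandwich bound: for log-concave laws `νᵢ`, `1 < λ* < λ < λ^max`
and `Rₙ* = E[Sₙ^{λ*}]`, the conditional law of `(X₁,…,X_ℓ)` given
`{Sₙ > Rₙ*}` is stochastically dominated by the conditional law of
`(X₁^λ,…,X_ℓ^λ)` given `{Sₙ^λ > Rₙ*}`, for every `n ≥ ℓ`. -/
theorem gcp_upper_bound (ν : ℕ → ℕ → ℝ)
    (hlc : ∀ i, LogConcavePMF (ν i)) (hν1 : ∀ i, HasSum (ν i) 1)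
    (lamstar lam : ℝ) (h1 : 1 < lamstar) (hsl : lamstar < lam)
    (hZstar : ∀ i, Summable (fun x : ℕ => lamstar ^ x * ν i x))
    (hZ : ∀ i, Summable (fun x : ℕ => lam ^ x * ν i x))
    (ℓ n : ℕ) (hln : ℓ ≤ n)
    (R : ℝ) (hR : R = ∑ i ∈ Finset.range n, ∑' x : ℕ, (x : ℝ) * tilt (ν i) lamstar x)
    (hpos : 0 < ∑' x : Fin n → ℕ,
      if R < ((∑ i, x i : ℕ) : ℝ) then ∏ i : Fin n, ν i (x i) else 0)
    (hpos' : 0 < ∑' x : Fin n → ℕ,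
      if R < ((∑ i, x i : ℕ) : ℝ) then ∏ i : Fin n, tilt (ν i) lam (x i) else 0) :
    StochDom (condMarginal ν ℓ n hln R)
      (condMarginal (fun i => tilt (ν i) lam) ℓ n hln R) :=
  gcp_upper_bound_general ν hlc hν1 lamstar lam h1 hsl hZ ℓ n hln R hpos
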